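/- For any two polygonal curves σ and τ and any parameter k ∈ ℕ, the discrete Fréchet distance is a k-approximation of the k-DTW distance: d_dF(σ,τ) ≤ d_kDTW(σ,τ) ≤ k · d_dF(σ,τ). -/

import Mathlib

open List

/-- A (monotone) traversal of two curves with `m'` and `m''` vertices:
a sequence of (0-based) index pairs starting at `(0,0)`, ending at `(m'-1, m''-1)`,
where each pair is followed by one that increments at least one index by one. -/
def IsTraversal (m' m'' : ℕ) (T : List (ℕ × ℕ)) : Prop :=
  T ≠ [] ∧ T.head? = some (0, 0) ∧ T.getLast? = some (m' - 1, m'' - 1) ∧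
  (∀ p ∈ T, p.1 < m' ∧ p.2 < m'') ∧
  T.Chain' (fun a b => b = (a.1 + 1, a.2) ∨ b = (a.1, a.2 + 1) ∨ b = (a.1 + 1, a.2 + 1))

/-- Sum of the `k` largest entries of a list of reals (zero-padded if the list is shorter). -/
noncomputable def topkSum (k : ℕ) (l : List ℝ) : ℝ :=
  ((l.insertionSort (· ≥ ·)).take k).sum

/-- The list of matched distances of a traversal. -/
def matchedDists {E : Type*} [PseudoMetricSpace E] (σ τ : ℕ → E) (T : List (ℕ × ℕ)) :
    List ℝ :=
  T.map fun p => dist (σ p.1) (τ p.2)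

/-- The `k`-DTW distance of curves `σ` (complexity `m'`) and `τ` (complexity `m''`). -/
noncomputable def kDTW {E : Type*} [PseudoMetricSpace E] (k : ℕ) (σ τ : ℕ → E)
    (m' m'' : ℕ) : ℝ :=
  sInf {x | ∃ T, IsTraversal m' m'' T ∧ x = topkSum k (matchedDists σ τ T)}

/-- The DTW distance. -/
noncomputable def DTW {E : Type*} [PseudoMetricSpace E] (σ τ : ℕ → E) (m' m'' : ℕ) : ℝ :=
  sInf {x | ∃ T, IsTraversal m' m'' T ∧ x = (matchedDists σ τ T).sum}

/-- The discrete Fréchet distance. -/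
noncomputable def discreteFrechet {E : Type*} [PseudoMetricSpace E] (σ τ : ℕ → E)
    (m' m'' : ℕ) : ℝ :=
  sInf {x | ∃ T, IsTraversal m' m'' T ∧ x = (matchedDists σ τ T).foldr max 0}

/-!
For a single traversal with matched distances `l`, the largest entry of `l` is one of its `k`
largest entries (`k ≥ 1`) and each of those is at most the largest, so
`max l ≤ topkSum k l ≤ k * max l`. Both distances are infima over the same set of traversals,
and these pointwise bounds pass to the infima.
-/

namespace List

theorem foldr_max_le {α : Type*} [LinearOrder α] {l : List α} {a b : α} (hb : b ≤ a)
    (h : ∀ x ∈ l, x ≤ a) : l.foldr max b ≤ a := by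
  induction l with
  | nil => exact hb
  | cons y l ih => exact max_le (h y mem_cons_self) (ih fun x hx => h x (mem_cons_of_mem y hx))

theorem le_foldr_max {α : Type*} [LinearOrder α] (l : List α) (b : α) : b ≤ l.foldr max b := by
  induction l with
  | nil => exact le_rfl
  | cons _ _ ih => exact le_max_of_le_right ih

end List

section TopkSum

variable {k : ℕ} {l : List ℝ}

theorem topkSum_nonneg (h0 : ∀ x ∈ l, 0 ≤ x) : 0 ≤ topkSum k l :=
  sum_nonneg fun x hx => h0 x ((perm_insertionSort _ l).subset (mem_of_mem_take hx))

theorem le_topkSum (h0 : ∀ x ∈ l, 0 ≤ x) (hk : 1 ≤ k) {x : ℝ} (hx : x ∈ l) :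
    x ≤ topkSum k l := by
  have hperm := perm_insertionSort (· ≥ ·) l
  obtain ⟨a, t, hs⟩ := exists_cons_of_ne_nil (ne_nil_of_mem (hperm.symm.subset hx))
  have hsorted := pairwise_insertionSort (· ≥ ·) l
  rw [hs] at hperm hsorted
  have hxa : x ≤ a := by
    rcases mem_cons.1 (hperm.symm.subset hx) with rfl | hxt
    · exact le_rfl
    · exact rel_of_pairwise_cons hsorted hxt
  have ha : a ∈ (a :: t).take k := by
    obtain ⟨k, rfl⟩ := Nat.exists_eq_add_of_le' hk
    exact mem_cons_self
  calc x ≤ a := hxa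
    _ ≤ topkSum k l := by
      rw [topkSum, hs]
      exact single_le_sum (fun y hy => h0 y (hperm.subset (mem_of_mem_take hy))) a ha

theorem foldr_max_le_topkSum (h0 : ∀ x ∈ l, 0 ≤ x) (hk : 1 ≤ k) :
    l.foldr max 0 ≤ topkSum k l :=
  foldr_max_le (topkSum_nonneg h0) fun _ hx => le_topkSum h0 hk hx

theorem topkSum_le_mul_foldr_max (k : ℕ) (l : List ℝ) :
    topkSum k l ≤ k * l.foldr max 0 := by
  set s := (l.insertionSort (· ≥ ·)).take k
  have hle : ∀ x ∈ s, x ≤ l.foldr max 0 := fun x hx =>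
    le_max_of_le' 0 ((perm_insertionSort _ l).subset (mem_of_mem_take hx)) le_rfl
  calc topkSum k l ≤ s.length • l.foldr max 0 := sum_le_card_nsmul s _ hle
    _ = s.length * l.foldr max 0 := nsmul_eq_mul _ _
    _ ≤ k * l.foldr max 0 := by
      gcongr
      · exact le_foldr_max l 0
      · exact length_take_le k _

end TopkSum

namespace Real

variable {α : Type*} {P : α → Prop}

-- Both infima are `sInf ∅ = 0` when no `a` satisfies `P`.
theorem sInf_setOf_eq_mono {f g : α → ℝ} (hf : ∀ a, P a → 0 ≤ f a)
    (hfg : ∀ a, P a → f a ≤ g a) :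
    sInf {x | ∃ a, P a ∧ x = f a} ≤ sInf {x | ∃ a, P a ∧ x = g a} := by
  by_cases hP : ∃ a, P a
  · obtain ⟨a, ha⟩ := hP
    have hbdd : BddBelow {x | ∃ a, P a ∧ x = f a} := ⟨0, by rintro _ ⟨b, hb, rfl⟩; exact hf b hb⟩
    refine le_csInf ⟨_, a, ha, rfl⟩ ?_
    rintro _ ⟨b, hb, rfl⟩
    exact (csInf_le hbdd ⟨b, hb, rfl⟩).trans (hfg b hb)
  · push Not at hP
    simp [hP]

theorem sInf_setOf_eq_mul (f : α → ℝ) {c : ℝ} (hc : 0 ≤ c) :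
    sInf {x | ∃ a, P a ∧ x = c * f a} = c * sInf {x | ∃ a, P a ∧ x = f a} := by
  rw [← smul_eq_mul, ← sInf_smul_of_nonneg hc]
  congr 1
  ext x
  simp [Set.mem_smul_set, eq_comm]

end Real

section Curves

variable {E : Type*} [PseudoMetricSpace E] (σ τ : ℕ → E) (m' m'' : ℕ)

theorem matchedDists_nonneg (T : List (ℕ × ℕ)) : ∀ x ∈ matchedDists σ τ T, 0 ≤ x := by
  simp only [matchedDists, mem_map]
  rintro _ ⟨p, -, rfl⟩
  exact dist_nonneg

theorem discreteFrechet_le_kDTW {k : ℕ} (hk : 1 ≤ k) :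
    discreteFrechet σ τ m' m'' ≤ kDTW k σ τ m' m'' :=
  Real.sInf_setOf_eq_mono (fun _ _ => le_foldr_max _ 0)
    fun T _ => foldr_max_le_topkSum (matchedDists_nonneg σ τ T) hk

theorem kDTW_le_mul_discreteFrechet (k : ℕ) :
    kDTW k σ τ m' m'' ≤ k * discreteFrechet σ τ m' m'' := by
  rw [discreteFrechet, ← Real.sInf_setOf_eq_mul _ k.cast_nonneg]
  exact Real.sInf_setOf_eq_mono (fun T _ => topkSum_nonneg (matchedDists_nonneg σ τ T))
    fun T _ => topkSum_le_mul_foldr_max k _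

end Curves

theorem frechet_kapprox_kDTW_general {d : ℕ} (k m' m'' : ℕ) (hk : 1 ≤ k)
    (σ τ : ℕ → EuclideanSpace ℝ (Fin d)) :
    discreteFrechet σ τ m' m'' ≤ kDTW k σ τ m' m'' ∧
    kDTW k σ τ m' m'' ≤ (k : ℝ) * discreteFrechet σ τ m' m'' :=
  ⟨discreteFrechet_le_kDTW σ τ m' m'' hk, kDTW_le_mul_discreteFrechet σ τ m' m'' k⟩

/-- the discrete Fréchet distance is a `k`-approximation of `k`-DTW. -/
theorem frechet_kapprox_kDTW {d : ℕ} (k m' m'' : ℕ) (hk : 1 ≤ k)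
    (hm' : 1 ≤ m') (hm'' : 1 ≤ m'')
    (σ τ : ℕ → EuclideanSpace ℝ (Fin d)) :
    discreteFrechet σ τ m' m'' ≤ kDTW k σ τ m' m'' ∧
    kDTW k σ τ m' m'' ≤ (k : ℝ) * discreteFrechet σ τ m' m'' :=
  frechet_kapprox_kDTW_general k m' m'' hk σ τ
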